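/- arXiv:1311.7170 — 6 statements merged into one kernel-verified Lean document; each statement's English description precedes it below -/
import Mathlib

section
/- By induction from the leaf lines of a tree network: if S_ij ≤ s_i + Σ_{h→i} S_hi for every line (i,j) (componentwise in real and imaginary parts), and Ŝ_ij = s_i + Σ_{h→i} Ŝ_hi for every line (i,j), then S_ij ≤ Ŝ_ij for every line (i,j). Moreover Ŝ_ij = Σ_{h : i ∈ P_h} s_h. -/
open Classical Finset

noncomputable section

/-- Bus `i` lies on the path `P_h` from bus `h` to the root. -/
def onPath (par : ℕ → ℕ) (i h : ℕ) : Prop := ∃ k, par^[k] h = i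

/-!
Every bus below bus `i` reaches `i` through exactly one child of `i`, so the subtree of `i` is
`{i}` together with the disjoint union of the subtrees of its children. Hence
`i ↦ Σ_{i ∈ P_h} s_h` obeys the same recursion as `Ŝ`. Children carry larger labels than their
parent, so both claims follow by induction over the buses in decreasing order; for the
inequality, `≤` is preserved by summing over the children and adding `s_i`.
-/

def children (n : ℕ) (par : ℕ → ℕ) (i : ℕ) : Finset ℕ :=
  (Icc 1 n).filter (fun h => par h = i)

def subtree (n : ℕ) (par : ℕ → ℕ) (i : ℕ) : Finset ℕ :=
  (Icc 1 n).filter (fun h => onPath par i h)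

variable {n : ℕ} {par : ℕ → ℕ}

theorem par_le_self (hpar0 : par 0 = 0) (hpar : ∀ i, 1 ≤ i → par i < i) (h : ℕ) :
    par h ≤ h := by
  rcases Nat.eq_zero_or_pos h with rfl | hh
  · simp [hpar0]
  · exact (hpar h hh).le

theorem onPath_refl (a : ℕ) : onPath par a a := ⟨0, rfl⟩

theorem onPath.trans {a b c : ℕ} (hab : onPath par a b) (hbc : onPath par b c) :
    onPath par a c := by
  obtain ⟨k, rfl⟩ := hab
  obtain ⟨l, rfl⟩ := hbc
  exact ⟨k + l, Function.iterate_add_apply par k l c⟩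

theorem onPath.le (hle : ∀ h, par h ≤ h) {a b : ℕ} (hab : onPath par a b) : a ≤ b := by
  obtain ⟨k, rfl⟩ := hab
  exact Function.iterate_le_id_of_le_id hle k b

theorem onPath.eq_or_onPath_par {a b : ℕ} (hab : onPath par a b) :
    a = b ∨ onPath par a (par b) := by
  obtain ⟨_ | k, rfl⟩ := hab
  · exact .inl rfl
  · exact .inr ⟨k, (Function.iterate_succ_apply par k b).symm⟩

theorem onPath.eq_or_exists_par_eq {a b : ℕ} (hab : onPath par a b) :
    a = b ∨ ∃ c, par c = a ∧ onPath par c b := by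
  obtain ⟨_ | k, rfl⟩ := hab
  · exact .inl rfl
  · exact .inr ⟨par^[k] b, (Function.iterate_succ_apply' par k b).symm, k, rfl⟩

theorem onPath_total {a b h : ℕ} (ha : onPath par a h) (hb : onPath par b h) :
    onPath par a b ∨ onPath par b a := by
  obtain ⟨k, rfl⟩ := ha
  obtain ⟨l, rfl⟩ := hb
  rcases le_total k l with hkl | hlk
  · exact .inr ⟨l - k, by rw [← Function.iterate_add_apply, Nat.sub_add_cancel hkl]⟩
  · exact .inl ⟨k - l, by rw [← Function.iterate_add_apply, Nat.sub_add_cancel hlk]⟩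

theorem eq_of_onPath_of_par_eq (hle : ∀ h, par h ≤ h) {a b : ℕ} (hab : onPath par a b)
    (hlt : par a < a) (hab' : par a = par b) : a = b :=
  hab.eq_or_onPath_par.resolve_right fun h => (h.le hle).not_gt (hab' ▸ hlt)

theorem mem_children {i c : ℕ} : c ∈ children n par i ↔ (1 ≤ c ∧ c ≤ n) ∧ par c = i := by
  simp [children]

theorem mem_subtree {i h : ℕ} : h ∈ subtree n par i ↔ (1 ≤ h ∧ h ≤ n) ∧ onPath par i h := by
  simp [subtree]

theorem lt_of_mem_children (hpar : ∀ i, 1 ≤ i → par i < i) {i c : ℕ}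
    (hc : c ∈ children n par i) : i < c := by
  obtain ⟨⟨hc1, -⟩, rfl⟩ := mem_children.1 hc
  exact hpar c hc1

theorem induction_from_leaves (hpar : ∀ i, 1 ≤ i → par i < i) {P : ℕ → Prop}
    (step : ∀ i, 1 ≤ i → i ≤ n → (∀ c ∈ children n par i, P c) → P i)
    (i : ℕ) (hi : 1 ≤ i) (hin : i ≤ n) : P i :=
  step i hi hin fun c hc =>
    induction_from_leaves hpar step c (mem_children.1 hc).1.1 (mem_children.1 hc).1.2
termination_by n - i
decreasing_by
  have := lt_of_mem_children hpar hc
  have := (mem_children.1 hc).1.2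
  omega

theorem pairwiseDisjoint_subtree_children (hpar0 : par 0 = 0) (hpar : ∀ i, 1 ≤ i → par i < i)
    (i : ℕ) : (children n par i : Set ℕ).PairwiseDisjoint (subtree n par) := by
  have hle := par_le_self hpar0 hpar
  intro c hc c' hc' hne
  obtain ⟨⟨hc1, -⟩, hpc⟩ := mem_children.1 hc
  obtain ⟨⟨hc1', -⟩, hpc'⟩ := mem_children.1 hc'
  refine disjoint_left.2 fun h hch hc'h => ?_
  rcases onPath_total (mem_subtree.1 hch).2 (mem_subtree.1 hc'h).2 with hcc' | hc'c
  · exact hne (eq_of_onPath_of_par_eq hle hcc' (hpar c hc1) (hpc.trans hpc'.symm))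
  · exact hne (eq_of_onPath_of_par_eq hle hc'c (hpar c' hc1') (hpc'.trans hpc.symm)).symm

theorem subtree_eq_insert_biUnion (hpar0 : par 0 = 0) (hpar : ∀ i, 1 ≤ i → par i < i) {i : ℕ}
    (hi : 1 ≤ i) (hin : i ≤ n) :
    subtree n par i = insert i ((children n par i).biUnion (subtree n par)) := by
  have hle := par_le_self hpar0 hpar
  ext h
  simp only [mem_insert, mem_biUnion, mem_subtree, mem_children]
  constructor
  · rintro ⟨hh, hih⟩
    refine hih.eq_or_exists_par_eq.imp (fun hih => hih.symm) ?_
    rintro ⟨c, rfl, hch⟩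
    have hc0 : c ≠ 0 := by rintro rfl; omega
    exact ⟨c, ⟨⟨Nat.one_le_iff_ne_zero.2 hc0, (hch.le hle).trans hh.2⟩, rfl⟩, hh, hch⟩
  · rintro (rfl | ⟨c, ⟨-, rfl⟩, hh, hch⟩)
    · exact ⟨⟨hi, hin⟩, onPath_refl h⟩
    · exact ⟨hh, onPath.trans ⟨1, rfl⟩ hch⟩

theorem sum_subtree {M : Type*} [AddCommMonoid M] (hpar0 : par 0 = 0)
    (hpar : ∀ i, 1 ≤ i → par i < i) (s : ℕ → M) {i : ℕ} (hi : 1 ≤ i) (hin : i ≤ n) :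
    ∑ h ∈ subtree n par i, s h = s i + ∑ c ∈ children n par i, ∑ h ∈ subtree n par c, s h := by
  have hle := par_le_self hpar0 hpar
  have hi_notMem : i ∉ (children n par i).biUnion (subtree n par) := by
    simp only [mem_biUnion, mem_subtree, not_exists, not_and]
    exact fun c hc _ hci => (hci.le hle).not_gt (lt_of_mem_children hpar hc)
  rw [subtree_eq_insert_biUnion hpar0 hpar hi hin, sum_insert hi_notMem,
    sum_biUnion (pairwiseDisjoint_subtree_children hpar0 hpar i)]

theorem eq_sum_subtree {M : Type*} [AddCommMonoid M] (hpar0 : par 0 = 0)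
    (hpar : ∀ i, 1 ≤ i → par i < i) {s T : ℕ → M}
    (hT : ∀ i, 1 ≤ i → i ≤ n → T i = s i + ∑ c ∈ children n par i, T c) :
    ∀ i, 1 ≤ i → i ≤ n → T i = ∑ h ∈ subtree n par i, s h :=
  induction_from_leaves hpar fun i hi hin ih => by
    rw [hT i hi hin, sum_subtree hpar0 hpar s hi hin, sum_congr rfl ih]

theorem le_of_le_add_sum_children {M : Type*} [AddCommMonoid M] [PartialOrder M]
    [IsOrderedAddMonoid M] (hpar : ∀ i, 1 ≤ i → par i < i) {s S T : ℕ → M}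
    (hS : ∀ i, 1 ≤ i → i ≤ n → S i ≤ s i + ∑ c ∈ children n par i, S c)
    (hT : ∀ i, 1 ≤ i → i ≤ n → T i = s i + ∑ c ∈ children n par i, T c) :
    ∀ i, 1 ≤ i → i ≤ n → S i ≤ T i :=
  induction_from_leaves hpar fun i hi hin ih => by
    refine (hS i hi hin).trans ?_
    rw [hT i hi hin]
    gcongr with c hc
    exact ih c hc

theorem map_le_of_map_le_add_sum_children {M N : Type*} [AddCommMonoid M] [AddCommMonoid N]
    [PartialOrder N] [IsOrderedAddMonoid N] (hpar : ∀ i, 1 ≤ i → par i < i) (f : M →+ N)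
    {s S T : ℕ → M}
    (hS : ∀ i, 1 ≤ i → i ≤ n → f (S i) ≤ f (s i + ∑ c ∈ children n par i, S c))
    (hT : ∀ i, 1 ≤ i → i ≤ n → T i = s i + ∑ c ∈ children n par i, T c) :
    ∀ i, 1 ≤ i → i ≤ n → f (S i) ≤ f (T i) :=
  le_of_le_add_sum_children hpar (s := f ∘ s) (S := f ∘ S) (T := f ∘ T)
    (fun i hi hin => by simpa using hS i hi hin) (fun i hi hin => by simp [hT i hi hin])

/-- Induction from the leaf lines of a tree: if `S_{ij} ≤ s_i + Σ_{h→i} S_{hi}` componentwise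
(in real and imaginary parts) for every line, and `Ŝ_{ij} = s_i + Σ_{h→i} Ŝ_{hi}` for every
line, then `S_{ij} ≤ Ŝ_{ij}` for every line; moreover `Ŝ_{ij} = Σ_{h : i ∈ P_h} s_h`. -/
theorem hatS_dominates (n : ℕ) (par : ℕ → ℕ)
    (hpar0 : par 0 = 0) (hpar : ∀ i, 1 ≤ i → par i < i)
    (s S Shat : ℕ → ℂ)
    (hS : ∀ i, 1 ≤ i → i ≤ n →
      (S i).re ≤ (s i + ∑ h ∈ (Finset.Icc 1 n).filter (fun h => par h = i), S h).re ∧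
      (S i).im ≤ (s i + ∑ h ∈ (Finset.Icc 1 n).filter (fun h => par h = i), S h).im)
    (hShat : ∀ i, 1 ≤ i → i ≤ n →
      Shat i = s i + ∑ h ∈ (Finset.Icc 1 n).filter (fun h => par h = i), Shat h) :
    ∀ i, 1 ≤ i → i ≤ n →
      ((S i).re ≤ (Shat i).re ∧ (S i).im ≤ (Shat i).im) ∧
      Shat i = ∑ h ∈ (Finset.Icc 1 n).filter (fun h => onPath par i h), s h := by
  intro i hi hin
  refine ⟨⟨?_, ?_⟩, eq_sum_subtree hpar0 hpar hShat i hi hin⟩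
  · exact map_le_of_map_le_add_sum_children hpar Complex.reAddGroupHom
      (fun i hi hin => (hS i hi hin).1) hShat i hi hin
  · exact map_le_of_map_le_add_sum_children hpar Complex.imAddGroupHom
      (fun i hi hin => (hS i hi hin).2) hShat i hi hin
end
end

section
/- Let m ≥ 1, d ≥ 1, and let A̲_1,...,A̲_{m−1}, A_1,...,A_{m−1} ∈ ℝ^{d×d} and u_1,...,u_m ∈ ℝ^d satisfy: (a) A̲_s A̲_{s+1} ⋯ A̲_{t−1} u_t > 0 componentwise whenever 1 ≤ s ≤ t ≤ m; (b) for each k = 1,...,m−1 there exists b_k ∈ ℝ^d with b_k ≥ 0 componentwise such that A_k − A̲_k = u_k b_kᵀ. Then A_s A_{s+1} ⋯ A_{t−1} u_t > 0 componentwise whenever 1 ≤ s ≤ t ≤ m. -/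
/-!
Write `B` for `A̲`. Comparing `A_s ⋯ A_{t-1}` with `B_s ⋯ B_{t-1}` one factor at a time gives the
discrete variation-of-constants formula
`A_s ⋯ A_{t-1} v = B_s ⋯ B_{t-1} v + ∑_{s ≤ k < t} B_s ⋯ B_{k-1} (A_k - B_k) A_{k+1} ⋯ A_{t-1} v`.
For `v = u_t` and `A_k - B_k = u_k b_kᵀ`, the `k`-th summand is `(b_k ⬝ A_{k+1} ⋯ A_{t-1} u_t)`
times the positive vector `B_s ⋯ B_{k-1} u_k`, and this coefficient is nonnegative by descending
induction on `s`.
-/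

/-- Product `A s * A (s+1) * ⋯ * A (t-1)` applied to the vector `u`
(the empty product, when `s ≥ t`, is the identity). -/
def chainA (d : ℕ) (A : ℕ → Matrix (Fin d) (Fin d) ℝ) (s t : ℕ) (u : Fin d → ℝ) :
    Fin d → ℝ :=
  if _ : s < t then (A s).mulVec (chainA d A (s + 1) t u) else u
termination_by t - s

open Matrix

section

variable {d : ℕ}

theorem chainA_of_le (A : ℕ → Matrix (Fin d) (Fin d) ℝ) {s t : ℕ} (h : t ≤ s) (v : Fin d → ℝ) :
    chainA d A s t v = v := by
  rw [chainA, dif_neg (not_lt.2 h)]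

theorem chainA_self (A : ℕ → Matrix (Fin d) (Fin d) ℝ) (s : ℕ) (v : Fin d → ℝ) :
    chainA d A s s v = v :=
  chainA_of_le A le_rfl v

theorem chainA_of_lt (A : ℕ → Matrix (Fin d) (Fin d) ℝ) {s t : ℕ} (h : s < t) (v : Fin d → ℝ) :
    chainA d A s t v = A s *ᵥ chainA d A (s + 1) t v := by
  rw [chainA, dif_pos h]

theorem chainA_smul (A : ℕ → Matrix (Fin d) (Fin d) ℝ) (s t : ℕ) (c : ℝ) (v : Fin d → ℝ) :
    chainA d A s t (c • v) = c • chainA d A s t v := by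
  rcases lt_or_ge s t with h | h
  · rw [chainA_of_lt A h, chainA_of_lt A h, chainA_smul A (s + 1) t c v, mulVec_smul]
  · rw [chainA_of_le A h, chainA_of_le A h]
termination_by t - s

theorem chainA_eq_add_sum (A B : ℕ → Matrix (Fin d) (Fin d) ℝ) (s t : ℕ) (v : Fin d → ℝ) :
    chainA d A s t v = chainA d B s t v +
      ∑ k ∈ Finset.Ico s t, chainA d B s k ((A k - B k) *ᵥ chainA d A (k + 1) t v) := by
  rcases lt_or_ge s t with h | h
  · have ih := chainA_eq_add_sum A B (s + 1) t v
    have hstep : B s *ᵥ chainA d A (s + 1) t v = chainA d B s t v +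
        ∑ k ∈ Finset.Ico (s + 1) t, chainA d B s k ((A k - B k) *ᵥ chainA d A (k + 1) t v) := by
      rw [ih, mulVec_add, mulVec_sum, ← chainA_of_lt B h]
      congr 1
      refine Finset.sum_congr rfl fun k hk => (chainA_of_lt B ?_ _).symm
      exact (Finset.mem_Ico.1 hk).1
    rw [Finset.sum_eq_sum_Ico_succ_bot h, chainA_self, add_left_comm, ← hstep, chainA_of_lt A h,
      sub_mulVec]
    abel
  · rw [chainA_of_le A h, chainA_of_le B h, Finset.Ico_eq_empty_of_le h, Finset.sum_empty,
      add_zero]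
termination_by t - s

theorem chainA_pos_of_sub_eq_vecMulVec {A B : ℕ → Matrix (Fin d) (Fin d) ℝ}
    {u : ℕ → Fin d → ℝ} {s t : ℕ} (hst : s ≤ t)
    (hB : ∀ r k, s ≤ r → r ≤ k → k ≤ t → ∀ a, 0 < chainA d B r k (u k) a)
    (hAB : ∀ k, s ≤ k → k < t → ∃ b : Fin d → ℝ, (∀ a, 0 ≤ b a) ∧ A k - B k = vecMulVec (u k) b)
    (a : Fin d) : 0 < chainA d A s t (u t) a := by
  have hterm : ∀ k ∈ Finset.Ico s t,
      0 ≤ chainA d B s k ((A k - B k) *ᵥ chainA d A (k + 1) t (u t)) a := by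
    intro k hk
    obtain ⟨hsk, hkt⟩ := Finset.mem_Ico.1 hk
    obtain ⟨b, hb, hAk⟩ := hAB k hsk hkt
    have hw : ∀ j, 0 < chainA d A (k + 1) t (u t) j := chainA_pos_of_sub_eq_vecMulVec hkt
      (fun r l hr => hB r l (by omega)) (fun l hl => hAB l (by omega))
    have hcoeff : 0 ≤ b ⬝ᵥ chainA d A (k + 1) t (u t) :=
      Finset.sum_nonneg fun j _ => mul_nonneg (hb j) (hw j).le
    rw [hAk, vecMulVec_mulVec, op_smul_eq_smul, chainA_smul, Pi.smul_apply, smul_eq_mul]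
    exact mul_nonneg hcoeff (hB s k le_rfl hsk hkt.le a).le
  rw [chainA_eq_add_sum A B, Pi.add_apply, Finset.sum_apply]
  exact add_pos_of_pos_of_nonneg (hB s t le_rfl hst le_rfl a) (Finset.sum_nonneg hterm)
termination_by t - s
decreasing_by omega

end

theorem matrix_chain_positive_general (m d : ℕ)
    (Aund A : ℕ → Matrix (Fin d) (Fin d) ℝ) (u : ℕ → Fin d → ℝ)
    (hund : ∀ s t, 1 ≤ s → s ≤ t → t ≤ m → ∀ a, 0 < chainA d Aund s t (u t) a)
    (hb : ∀ k, 1 ≤ k → k ≤ m - 1 → ∃ b : Fin d → ℝ, (∀ a, 0 ≤ b a) ∧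
      A k - Aund k = Matrix.of (fun i j => u k i * b j)) :
    ∀ s t, 1 ≤ s → s ≤ t → t ≤ m → ∀ a, 0 < chainA d A s t (u t) a :=
  fun _ _ h1 hst htm => chainA_pos_of_sub_eq_vecMulVec hst
    (fun r k hr hrk hkt => hund r k (h1.trans hr) hrk (hkt.trans htm))
    (fun k hk hkt => hb k (h1.trans hk) (by omega))

/-- Lemma 3: if `A̲_s ⋯ A̲_{t-1} u_t > 0` componentwise whenever `1 ≤ s ≤ t ≤ m`, and each
`A_k − A̲_k = u_k b_kᵀ` for some componentwise nonnegative `b_k` (`k = 1,…,m−1`), then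
`A_s ⋯ A_{t-1} u_t > 0` componentwise whenever `1 ≤ s ≤ t ≤ m`. -/
theorem matrix_chain_positive (m d : ℕ) (hm : 1 ≤ m) (hd : 1 ≤ d)
    (Aund A : ℕ → Matrix (Fin d) (Fin d) ℝ) (u : ℕ → Fin d → ℝ)
    (hund : ∀ s t, 1 ≤ s → s ≤ t → t ≤ m → ∀ a, 0 < chainA d Aund s t (u t) a)
    (hb : ∀ k, 1 ≤ k → k ≤ m - 1 → ∃ b : Fin d → ℝ, (∀ a, 0 ≤ b a) ∧
      A k - Aund k = Matrix.of (fun i j => u k i * b j)) :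
    ∀ s t, 1 ≤ s → s ≤ t → t ≤ m → ∀ a, 0 < chainA d A s t (u t) a :=
  matrix_chain_positive_general m d Aund A u hund hb
end

section
/- Let i ≥ 1 and let c, d, e, f ∈ ℝ^i satisfy 0 < c_j ≤ 1, d_j ≥ 0, e_j ≥ 0, 0 < f_j ≤ 1 for all j, and let u ∈ ℝ² with u > 0 componentwise. If the matrix [[∏_{j=1}^i c_j, −Σ_{j=1}^i d_j], [−Σ_{j=1}^i e_j, ∏_{j=1}^i f_j]] applied to u is componentwise strictly positive, then for every j ∈ {1,...,i} the product of matrices M_j M_{j+1} ⋯ M_i applied to u is componentwise strictly positive, where M_k = [[c_k, −d_k], [−e_k, f_k]]. -/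
/-!
Write `v_j = M_j ⋯ M_i u` and let `B_j` be the matrix
`[[∏_{k=j}^i c_k, -∑_{k=j}^i d_k], [-∑_{k=j}^i e_k, ∏_{k=j}^i f_k]]` (`boundMatrix`).
Downward induction on `j` gives `B_j u ≤ v_j ≤ u`: from `v_{j+1} ≤ u` and `c_j ≤ 1` one gets
`B_j u ≤ M_j v_{j+1}`, and a nonnegative vector is not increased by `M_j`. Shrinking the index
set can only increase the products and decrease the sums, so `B_j u ≥ B_1 u > 0`; this keeps
every `v_{j+1}` nonnegative along the induction and proves the claim.
-/

open Finset

noncomputable section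

/-- Product `M s * M (s+1) * ⋯ * M (t-1)` applied to the vector `u`
(the empty product, when `s ≥ t`, is the identity). -/
def chainM (M : ℕ → Matrix (Fin 2) (Fin 2) ℝ) (s t : ℕ) (u : Fin 2 → ℝ) : Fin 2 → ℝ :=
  if _ : s < t then (M s).mulVec (chainM M (s + 1) t u) else u
termination_by t - s

open Matrix

theorem chainM_of_lt (M : ℕ → Matrix (Fin 2) (Fin 2) ℝ) {s t : ℕ} (h : s < t) (u : Fin 2 → ℝ) :
    chainM M s t u = M s *ᵥ chainM M (s + 1) t u := by
  rw [chainM, dif_pos h]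

theorem chainM_self (M : ℕ → Matrix (Fin 2) (Fin 2) ℝ) (t : ℕ) (u : Fin 2 → ℝ) :
    chainM M t t u = u := by
  rw [chainM, dif_neg (lt_irrefl t)]

section fin_two

variable {α : Type*} [NonUnitalNonAssocSemiring α] (a b c d : α) (v : Fin 2 → α)

@[simp]
theorem mulVec_fin_two_zero : (!![a, b; c, d] *ᵥ v) 0 = a * v 0 + b * v 1 := by
  simp [mulVec, dotProduct, Fin.sum_univ_two]

@[simp]
theorem mulVec_fin_two_one : (!![a, b; c, d] *ᵥ v) 1 = c * v 0 + d * v 1 := by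
  simp [mulVec, dotProduct, Fin.sum_univ_two]

end fin_two

theorem mulVec_le_of_nonneg_of_le {a b c d : ℝ} (ha : a ≤ 1) (hb : 0 ≤ b) (hc : 0 ≤ c) (hd : d ≤ 1)
    {u v : Fin 2 → ℝ} (hv : 0 ≤ v) (hvu : v ≤ u) : !![a, -b; -c, d] *ᵥ v ≤ u := by
  simp only [Pi.le_def, Fin.forall_fin_two, Pi.zero_apply, mulVec_fin_two_zero,
    mulVec_fin_two_one] at hv hvu ⊢
  constructor <;> nlinarith

def boundMatrix (c d e f : ℕ → ℝ) (s : Finset ℕ) : Matrix (Fin 2) (Fin 2) ℝ :=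
  !![∏ k ∈ s, c k, -∑ k ∈ s, d k; -∑ k ∈ s, e k, ∏ k ∈ s, f k]

section boundMatrix

variable {c d e f : ℕ → ℝ}

@[simp]
theorem boundMatrix_empty : boundMatrix c d e f ∅ = 1 := by
  simp [boundMatrix, one_fin_two]

theorem boundMatrix_mulVec_le_of_subset {s t : Finset ℕ} (hst : s ⊆ t)
    (hc : ∀ k ∈ t, 0 ≤ c k ∧ c k ≤ 1) (hd : ∀ k ∈ t, 0 ≤ d k) (he : ∀ k ∈ t, 0 ≤ e k)
    (hf : ∀ k ∈ t, 0 ≤ f k ∧ f k ≤ 1) {u : Fin 2 → ℝ} (hu : 0 ≤ u) :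
    boundMatrix c d e f t *ᵥ u ≤ boundMatrix c d e f s *ᵥ u := by
  have hcs : ∏ k ∈ t, c k ≤ ∏ k ∈ s, c k :=
    prod_le_prod_of_subset_of_le_one hst (fun k hk => (hc k hk).1) fun k hk _ => (hc k hk).2
  have hfs : ∏ k ∈ t, f k ≤ ∏ k ∈ s, f k :=
    prod_le_prod_of_subset_of_le_one hst (fun k hk => (hf k hk).1) fun k hk _ => (hf k hk).2
  have hds : ∑ k ∈ s, d k ≤ ∑ k ∈ t, d k :=
    sum_le_sum_of_subset_of_nonneg hst fun k hk _ => hd k hk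
  have hes : ∑ k ∈ s, e k ≤ ∑ k ∈ t, e k :=
    sum_le_sum_of_subset_of_nonneg hst fun k hk _ => he k hk
  have hu₀ : 0 ≤ u 0 := hu 0
  have hu₁ : 0 ≤ u 1 := hu 1
  simp only [boundMatrix, Pi.le_def, Fin.forall_fin_two, mulVec_fin_two_zero, mulVec_fin_two_one]
  constructor <;> nlinarith

theorem boundMatrix_insert_mulVec_le {s : Finset ℕ} {k : ℕ} (hk : k ∉ s)
    (hc : 0 ≤ c k ∧ c k ≤ 1) (hd : 0 ≤ d k) (he : 0 ≤ e k) (hf : 0 ≤ f k ∧ f k ≤ 1)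
    (hds : 0 ≤ ∑ j ∈ s, d j) (hes : 0 ≤ ∑ j ∈ s, e j) {u v : Fin 2 → ℝ} (hu : 0 ≤ u)
    (hv : boundMatrix c d e f s *ᵥ u ≤ v) (hvu : v ≤ u) :
    boundMatrix c d e f (insert k s) *ᵥ u ≤ !![c k, -d k; -e k, f k] *ᵥ v := by
  have hu₀ : 0 ≤ u 0 := hu 0
  have hu₁ : 0 ≤ u 1 := hu 1
  simp only [boundMatrix, prod_insert hk, sum_insert hk, Pi.le_def, Fin.forall_fin_two,
    mulVec_fin_two_zero, mulVec_fin_two_one] at hv hvu ⊢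
  obtain ⟨hv₀, hv₁⟩ := hv
  obtain ⟨hvu₀, hvu₁⟩ := hvu
  constructor
  · nlinarith [mul_le_mul_of_nonneg_left hv₀ hc.1, mul_le_mul_of_nonneg_left hvu₁ hd,
      mul_nonneg (sub_nonneg.2 hc.2) (mul_nonneg hds hu₁)]
  · nlinarith [mul_le_mul_of_nonneg_left hv₁ hf.1, mul_le_mul_of_nonneg_left hvu₀ he,
      mul_nonneg (sub_nonneg.2 hf.2) (mul_nonneg hes hu₀)]

theorem chainM_mem_Icc {m n : ℕ} (hc : ∀ k ∈ Icc m n, 0 ≤ c k ∧ c k ≤ 1)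
    (hd : ∀ k ∈ Icc m n, 0 ≤ d k) (he : ∀ k ∈ Icc m n, 0 ≤ e k)
    (hf : ∀ k ∈ Icc m n, 0 ≤ f k ∧ f k ≤ 1) {u : Fin 2 → ℝ} (hu : 0 ≤ u)
    (hpos : ∀ a, 0 < (boundMatrix c d e f (Icc m n) *ᵥ u) a) {j : ℕ} (hmj : m ≤ j)
    (hjn : j ≤ n + 1) :
    chainM (fun k => !![c k, -d k; -e k, f k]) j (n + 1) u ∈
      Set.Icc (boundMatrix c d e f (Icc j n) *ᵥ u) u := by
  refine Nat.decreasingInduction' (P := fun j => chainM _ j (n + 1) u ∈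
    Set.Icc (boundMatrix c d e f (Icc j n) *ᵥ u) u) ?_ hjn ?_
  · intro k hk_lt hjk ih
    have hmk : m ≤ k := hmj.trans hjk
    have hkn : k ≤ n := Nat.le_of_lt_succ hk_lt
    have hsub : Icc (k + 1) n ⊆ Icc m n := Icc_subset_Icc (by omega) le_rfl
    have hk : k ∈ Icc m n := mem_Icc.2 ⟨hmk, hkn⟩
    set v := chainM (fun k => !![c k, -d k; -e k, f k]) (k + 1) (n + 1) u
    have hv : 0 ≤ v := fun a => (hpos a).le.trans <|
      (boundMatrix_mulVec_le_of_subset hsub hc hd he hf hu a).trans (ih.1 a)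
    rw [chainM_of_lt _ hk_lt, ← insert_Icc_add_one_left_eq_Icc hkn]
    exact ⟨boundMatrix_insert_mulVec_le (by simp) (hc k hk) (hd k hk) (he k hk) (hf k hk)
        (sum_nonneg fun j hj => hd j (hsub hj)) (sum_nonneg fun j hj => he j (hsub hj)) hu ih.1
        ih.2,
      mulVec_le_of_nonneg_of_le (hc k hk).2 (hd k hk) (he k hk) (hf k hk).2 hv ih.2⟩
  · rw [Set.mem_Icc, chainM_self, Icc_eq_empty_of_lt n.lt_succ_self, boundMatrix_empty,
      one_mulVec]
    exact ⟨le_rfl, le_rfl⟩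

end boundMatrix

theorem product_matrix_positive_general (i : ℕ) (c d e f : ℕ → ℝ)
    (hc : ∀ j, 1 ≤ j → j ≤ i → 0 < c j ∧ c j ≤ 1)
    (hd : ∀ j, 1 ≤ j → j ≤ i → 0 ≤ d j)
    (he : ∀ j, 1 ≤ j → j ≤ i → 0 ≤ e j)
    (hf : ∀ j, 1 ≤ j → j ≤ i → 0 < f j ∧ f j ≤ 1)
    (u : Fin 2 → ℝ) (hu : ∀ a, 0 < u a)
    (hyp : ∀ a, 0 <
      (!![∏ j ∈ Finset.Icc 1 i, c j, -∑ j ∈ Finset.Icc 1 i, d j;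
          -∑ j ∈ Finset.Icc 1 i, e j, ∏ j ∈ Finset.Icc 1 i, f j]).mulVec u a) :
    ∀ j, 1 ≤ j → j ≤ i →
      ∀ a, 0 < chainM (fun k => !![c k, -d k; -e k, f k]) j (i + 1) u a := by
  have onIcc {P : ℕ → Prop} (h : ∀ k, 1 ≤ k → k ≤ i → P k) : ∀ k ∈ Icc 1 i, P k :=
    fun k hk => h k (mem_Icc.1 hk).1 (mem_Icc.1 hk).2
  have hc' := onIcc fun k h₁ h₂ => (hc k h₁ h₂).imp_left le_of_lt
  have hf' := onIcc fun k h₁ h₂ => (hf k h₁ h₂).imp_left le_of_lt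
  have hu' : 0 ≤ u := fun a => (hu a).le
  intro j h1j hji a
  calc 0 < (boundMatrix c d e f (Icc 1 i) *ᵥ u) a := hyp a
    _ ≤ (boundMatrix c d e f (Icc j i) *ᵥ u) a :=
      boundMatrix_mulVec_le_of_subset (Icc_subset_Icc_left h1j) hc' (onIcc hd) (onIcc he) hf'
        hu' a
    _ ≤ _ := (chainM_mem_Icc hc' (onIcc hd) (onIcc he) hf' hu' hyp h1j (by omega)).1 a

/-- Lemma 7: let `0 < c_j ≤ 1`, `d_j ≥ 0`, `e_j ≥ 0`, `0 < f_j ≤ 1` for `j = 1,…,i` and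
`u ∈ ℝ²` with `u > 0` componentwise. If
`[[∏ c_j, −Σ d_j], [−Σ e_j, ∏ f_j]] u > 0` componentwise, then for every `j ∈ {1,…,i}` the
product `M_j M_{j+1} ⋯ M_i u > 0` componentwise, where `M_k = [[c_k, −d_k], [−e_k, f_k]]`. -/
theorem product_matrix_positive (i : ℕ) (hi : 1 ≤ i) (c d e f : ℕ → ℝ)
    (hc : ∀ j, 1 ≤ j → j ≤ i → 0 < c j ∧ c j ≤ 1)
    (hd : ∀ j, 1 ≤ j → j ≤ i → 0 ≤ d j)
    (he : ∀ j, 1 ≤ j → j ≤ i → 0 ≤ e j)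
    (hf : ∀ j, 1 ≤ j → j ≤ i → 0 < f j ∧ f j ≤ 1)
    (u : Fin 2 → ℝ) (hu : ∀ a, 0 < u a)
    (hyp : ∀ a, 0 <
      (!![∏ j ∈ Finset.Icc 1 i, c j, -∑ j ∈ Finset.Icc 1 i, d j;
          -∑ j ∈ Finset.Icc 1 i, e j, ∏ j ∈ Finset.Icc 1 i, f j]).mulVec u a) :
    ∀ j, 1 ≤ j → j ≤ i →
      ∀ a, 0 < chainM (fun k => !![c k, -d k; -e k, f k]) j (i + 1) u a :=
  product_matrix_positive_general i c d e f hc hd he hf u hu hyp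
end
end

section
/- (Monotonicity of condition C1 in the injection bounds.) Fix a tree network with line parameters r_ij > 0, x_ij > 0 and voltage lower bounds v̲_i > 0. For bounds (p̄, q̄) define u_i = (r_ij, x_ij)ᵀ and A̲_i = I − (2/v̲_i) u_i (P̂⁺_ij(p̄), Q̂⁺_ij(q̄)) where P̂_ij(p̄) = Σ_{h : i∈P_h} p̄_h, Q̂_ij(q̄) = Σ_{h : i∈P_h} q̄_h and a⁺ = max{a,0}. Say C1 holds for (p̄,q̄) if A̲_{l_s} A̲_{l_{s+1}} ⋯ A̲_{l_{t−1}} u_{l_t} > 0 componentwise for every leaf l and all 1 ≤ s ≤ t ≤ n_l, where l = l_{n_l} → ⋯ → l_1 → l_0 = 0 is the path from l to the root. Then: if (p̄, q̄) ≤ (p̄′, q̄′) componentwise and C1 holds for (p̄′, q̄′), then C1 holds for (p̄, q̄). -/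
/-!
Write `A̲` for the matrices built from `(p̄, q̄)` and `A̲'` for those built from `(p̄', q̄')`.
Since `a ↦ a⁺` is monotone and `v̲ > 0`, each difference `A̲_i − A̲'_i = (2/v̲_i) u_i (ΔP̂⁺_i, ΔQ̂⁺_i)`
sends nonnegative vectors to nonnegative multiples of `u_i`. Telescoping,
`A̲_{l_s} ⋯ A̲_{l_{t-1}} u_{l_t} − A̲'_{l_s} ⋯ A̲'_{l_{t-1}} u_{l_t}`
is a sum over `s ≤ σ < t` of terms `c_σ · A̲_{l_s} ⋯ A̲_{l_{σ-1}} u_{l_σ}` with `c_σ ≥ 0`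
(C1 for `(p̄', q̄')` makes the tails `A̲'_{l_{σ+1}} ⋯ u_{l_t}` positive). By strong induction on `t`
each `A̲_{l_s} ⋯ u_{l_σ}` dominates `A̲'_{l_s} ⋯ u_{l_σ} > 0`, so every term is nonnegative.
-/

open Classical Finset

noncomputable section

/-- Product `A (bus s) * A (bus (s+1)) * ⋯ * A (bus (t-1))` applied to the vector `u`
(the empty product, when `s ≥ t`, is the identity). -/
def chainApply (A : ℕ → Matrix (Fin 2) (Fin 2) ℝ) (bus : ℕ → ℕ) (s t : ℕ)
    (u : Fin 2 → ℝ) : Fin 2 → ℝ :=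
  if _ : s < t then (A (bus s)).mulVec (chainApply A bus (s + 1) t u) else u
termination_by t - s

/-- Number of steps from bus `l` to the root `0` along the parent map `par`
(the depth `n_l` of bus `l` in the tree). -/
def depth (par : ℕ → ℕ) (l : ℕ) : ℕ :=
  if h : ∃ k, par^[k] l = 0 then Nat.find h else 0

/-- `P̂_{i,par i}(p) = Σ_{h : i ∈ P_h} p_h`, the linear-DistFlow power flow on line `(i, par i)`. -/
def hatP (n : ℕ) (par : ℕ → ℕ) (p : ℕ → ℝ) (i : ℕ) : ℝ :=
  ∑ h ∈ (Finset.Icc 1 n).filter (fun h => onPath par i h), p h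

/-- The vector `u_i = (r_{i,par i}, x_{i,par i})ᵀ`. -/
def uvec (r x : ℕ → ℝ) (i : ℕ) : Fin 2 → ℝ := ![r i, x i]

/-- The matrix `A̲_i = I − (2/v̲_i) u_i (P̂⁺_i(p̄), Q̂⁺_i(q̄))`. -/
def Amat (n : ℕ) (par : ℕ → ℕ) (r x vlow p q : ℕ → ℝ) (i : ℕ) :
    Matrix (Fin 2) (Fin 2) ℝ :=
  1 - (2 / vlow i) •
    Matrix.of (fun a b => uvec r x i a * ![max (hatP n par p i) 0, max (hatP n par q i) 0] b)

/-- A leaf bus: a bus in `{1,…,n}` with no children. -/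
def IsLeaf (n : ℕ) (par : ℕ → ℕ) (l : ℕ) : Prop :=
  1 ≤ l ∧ l ≤ n ∧ ∀ i, 1 ≤ i → i ≤ n → par i ≠ l

/-- Condition C1: `A̲_{l_s} ⋯ A̲_{l_{t-1}} u_{l_t} > 0` componentwise for every leaf `l`
and all `1 ≤ s ≤ t ≤ n_l`, where `l_k = par^[n_l − k] l`. -/
def C1 (n : ℕ) (par : ℕ → ℕ) (r x vlow p q : ℕ → ℝ) : Prop :=
  ∀ l, IsLeaf n par l → ∀ s t, 1 ≤ s → s ≤ t → t ≤ depth par l →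
    ∀ a, 0 < chainApply (Amat n par r x vlow p q) (fun k => par^[depth par l - k] l) s t
      (uvec r x (par^[depth par l - t] l)) a

open Matrix

section Chain

variable (A A' : ℕ → Matrix (Fin 2) (Fin 2) ℝ) (bus : ℕ → ℕ)

lemma chainApply_of_le {s t : ℕ} (h : t ≤ s) (u : Fin 2 → ℝ) : chainApply A bus s t u = u := by
  rw [chainApply, dif_neg h.not_gt]

lemma chainApply_of_lt {s t : ℕ} (h : s < t) (u : Fin 2 → ℝ) :
    chainApply A bus s t u = A (bus s) *ᵥ chainApply A bus (s + 1) t u := by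
  rw [chainApply, dif_pos h]

lemma chainApply_smul (s t : ℕ) (c : ℝ) (u : Fin 2 → ℝ) :
    chainApply A bus s t (c • u) = c • chainApply A bus s t u := by
  by_cases h : s < t
  · rw [chainApply_of_lt A bus h, chainApply_of_lt A bus h, chainApply_smul (s + 1) t c u,
      mulVec_smul]
  · rw [chainApply_of_le A bus (not_lt.1 h), chainApply_of_le A bus (not_lt.1 h)]
termination_by t - s

lemma chainApply_sub_chainApply {s t : ℕ} (hst : s ≤ t) (w : Fin 2 → ℝ) :
    chainApply A bus s t w - chainApply A' bus s t w =
      ∑ σ ∈ Ico s t, chainApply A bus s σ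
        ((A (bus σ) - A' (bus σ)) *ᵥ chainApply A' bus (σ + 1) t w) := by
  induction hd : t - s generalizing s with
  | zero =>
    obtain rfl : s = t := by omega
    simp [chainApply_of_le]
  | succ d ih =>
    have hlt : s < t := by omega
    have hsplit : A (bus s) *ᵥ chainApply A bus (s + 1) t w
          - A' (bus s) *ᵥ chainApply A' bus (s + 1) t w
        = A (bus s) *ᵥ (chainApply A bus (s + 1) t w - chainApply A' bus (s + 1) t w)
          + (A (bus s) - A' (bus s)) *ᵥ chainApply A' bus (s + 1) t w := by
      rw [mulVec_sub, sub_mulVec]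
      abel
    rw [chainApply_of_lt A bus hlt, chainApply_of_lt A' bus hlt, hsplit, ih hlt (by omega),
      mulVec_sum, sum_eq_sum_Ico_succ_bot hlt, chainApply_of_le A bus le_rfl, add_comm]
    congr 1
    exact sum_congr rfl fun σ hσ => (chainApply_of_lt A bus (mem_Ico.1 hσ).1 _).symm

lemma chainApply_le_chainApply {lo hi : ℕ} (u : ℕ → Fin 2 → ℝ)
    (hnonneg : ∀ s t, lo ≤ s → s ≤ t → t ≤ hi → 0 ≤ chainApply A' bus s t (u t))
    (hdiff : ∀ σ, lo ≤ σ → σ ≤ hi → ∀ w, 0 ≤ w →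
      ∃ c : ℝ, 0 ≤ c ∧ (A (bus σ) - A' (bus σ)) *ᵥ w = c • u σ)
    {s t : ℕ} (hs : lo ≤ s) (hst : s ≤ t) (ht : t ≤ hi) :
    chainApply A' bus s t (u t) ≤ chainApply A bus s t (u t) := by
  induction t using Nat.strong_induction_on generalizing s with
  | _ t ih =>
  rw [← sub_nonneg, chainApply_sub_chainApply A A' bus hst]
  refine sum_nonneg fun σ hσ => ?_
  obtain ⟨hsσ, hσt⟩ := mem_Ico.1 hσ
  obtain ⟨c, hc, hcu⟩ := hdiff σ (hs.trans hsσ) (hσt.le.trans ht) _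
    (hnonneg (σ + 1) t (by omega) hσt ht)
  rw [hcu, chainApply_smul]
  exact smul_nonneg hc
    ((hnonneg s σ hs hsσ (by omega)).trans (ih σ hσt hs hsσ (by omega)))

end Chain

lemma hatP_mono {n : ℕ} {p p' : ℕ → ℝ} (hp : ∀ i, 1 ≤ i → i ≤ n → p i ≤ p' i)
    (par : ℕ → ℕ) (i : ℕ) : hatP n par p i ≤ hatP n par p' i :=
  sum_le_sum fun h hh =>
    have hh := mem_Icc.1 (mem_filter.1 hh).1
    hp h hh.1 hh.2

lemma Amat_sub_Amat_mulVec (n : ℕ) (par : ℕ → ℕ) (r x vlow p q p' q' : ℕ → ℝ) (i : ℕ)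
    (w : Fin 2 → ℝ) :
    (Amat n par r x vlow p q i - Amat n par r x vlow p' q' i) *ᵥ w =
      ((2 / vlow i) * ((max (hatP n par p' i) 0 - max (hatP n par p i) 0) * w 0
        + (max (hatP n par q' i) 0 - max (hatP n par q i) 0) * w 1)) • uvec r x i := by
  ext a
  fin_cases a <;>
    simp [Amat, Matrix.mulVec, dotProduct, uvec, Fin.sum_univ_two] <;> ring

lemma exists_nonneg_Amat_sub_Amat_mulVec_eq_smul {n : ℕ} (par : ℕ → ℕ) (r x : ℕ → ℝ)
    {vlow p q p' q' : ℕ → ℝ} (hp : ∀ i, 1 ≤ i → i ≤ n → p i ≤ p' i)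
    (hq : ∀ i, 1 ≤ i → i ≤ n → q i ≤ q' i) {i : ℕ} (hv : 0 < vlow i)
    {w : Fin 2 → ℝ} (hw : 0 ≤ w) :
    ∃ c : ℝ, 0 ≤ c ∧ (Amat n par r x vlow p q i - Amat n par r x vlow p' q' i) *ᵥ w =
      c • uvec r x i := by
  refine ⟨_, ?_, Amat_sub_Amat_mulVec n par r x vlow p q p' q' i w⟩
  have hΔp := sub_nonneg.2 (max_le_max_right 0 (hatP_mono hp par i))
  have hΔq := sub_nonneg.2 (max_le_max_right 0 (hatP_mono hq par i))
  exact mul_nonneg (by positivity)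
    (add_nonneg (mul_nonneg hΔp (hw 0)) (mul_nonneg hΔq (hw 1)))

lemma iterate_ne_zero_of_lt_depth {par : ℕ → ℕ} {l j : ℕ} (hj : j < depth par l) :
    par^[j] l ≠ 0 := by
  unfold depth at hj
  split_ifs at hj with h
  · exact Nat.find_min h hj
  · omega

lemma iterate_le_of_forall_ne_zero {par : ℕ → ℕ} (hpar : ∀ i, 1 ≤ i → par i < i) {l k : ℕ}
    (h : ∀ j < k, par^[j] l ≠ 0) : par^[k] l ≤ l := by
  induction k with
  | zero => rfl
  | succ k ih =>
    rw [Function.iterate_succ_apply']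
    exact (hpar _ (Nat.one_le_iff_ne_zero.2 (h k k.lt_succ_self))).le.trans
      (ih fun j hj => h j (hj.trans k.lt_succ_self))

lemma iterate_depth_sub_mem_Icc {n : ℕ} {par : ℕ → ℕ} (hpar : ∀ i, 1 ≤ i → par i < i)
    {l k : ℕ} (hl : l ≤ n) (hk : 1 ≤ k) (hkl : k ≤ depth par l) :
    1 ≤ par^[depth par l - k] l ∧ par^[depth par l - k] l ≤ n :=
  ⟨Nat.one_le_iff_ne_zero.2 (iterate_ne_zero_of_lt_depth (by omega)),
    (iterate_le_of_forall_ne_zero hpar fun _ hj => iterate_ne_zero_of_lt_depth (by omega)).trans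
      hl⟩

theorem c1_monotone_general (n : ℕ) (par : ℕ → ℕ) (r x vlow p q p' q' : ℕ → ℝ)
    (hpar : ∀ i, 1 ≤ i → par i < i)
    (hv : ∀ i, 1 ≤ i → i ≤ n → 0 < vlow i)
    (hp : ∀ i, 1 ≤ i → i ≤ n → p i ≤ p' i) (hq : ∀ i, 1 ≤ i → i ≤ n → q i ≤ q' i)
    (hC1' : C1 n par r x vlow p' q') :
    C1 n par r x vlow p q := by
  intro l hl s t hs hst ht a
  refine (hC1' l hl s t hs hst ht a).trans_le ?_
  refine chainApply_le_chainApply _ _ _ (fun k => uvec r x (par^[depth par l - k] l))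
    (fun s t hs hst ht a => (hC1' l hl s t hs hst ht a).le) (fun σ hσ1 hσ w hw => ?_) hs hst ht a
  obtain ⟨hbus1, hbusn⟩ := iterate_depth_sub_mem_Icc hpar hl.2.1 hσ1 hσ
  exact exists_nonneg_Amat_sub_Amat_mulVec_eq_smul par r x hp hq (hv _ hbus1 hbusn) hw

/-- Proposition 2 (monotonicity of C1 in the injection bounds): if `(p̄,q̄) ≤ (p̄',q̄')`
componentwise and C1 holds for `(r,x,p̄',q̄',v̲)`, then C1 holds for `(r,x,p̄,q̄,v̲)`. -/
theorem c1_monotone (n : ℕ) (par : ℕ → ℕ) (r x vlow p q p' q' : ℕ → ℝ)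
    (hpar0 : par 0 = 0) (hpar : ∀ i, 1 ≤ i → par i < i)
    (hr : ∀ i, 1 ≤ i → i ≤ n → 0 < r i) (hx : ∀ i, 1 ≤ i → i ≤ n → 0 < x i)
    (hv : ∀ i, 1 ≤ i → i ≤ n → 0 < vlow i)
    (hp : ∀ i, 1 ≤ i → i ≤ n → p i ≤ p' i) (hq : ∀ i, 1 ≤ i → i ≤ n → q i ≤ q' i)
    (hC1' : C1 n par r x vlow p' q') :
    C1 n par r x vlow p q :=
  c1_monotone_general n par r x vlow p q p' q' hpar hv hp hq hC1'
end
end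

section
/- (Uniqueness of the exact SOCP solution.) Let w̃ = (s̃, S̃, ṽ, ℓ̃, s̃₀) and ŵ = (ŝ, Ŝ, v̂, ℓ̂, ŝ₀) be two solutions of a convex SOCP relaxation that are both exact, i.e., ṽ_i ℓ̃_ij = |S̃_ij|² and v̂_i ℓ̂_ij = |Ŝ_ij|² for every line (i,j), with ṽ_i, v̂_i > 0. Suppose their midpoint w = (w̃ + ŵ)/2 is also exact: v_i ℓ_ij = |S_ij|² for all (i,j) where v = (ṽ+v̂)/2, ℓ = (ℓ̃+ℓ̂)/2, S = (S̃+Ŝ)/2. Suppose further both satisfy the branch flow equations S_ij = s_i + Σ_{h→i}(S_hi − z_hi ℓ_hi) and v_i − v_j = 2Re(z̄_ij S_ij) − |z_ij|² ℓ_ij with the same fixed root voltage v₀ and the same injections s̃ = ŝ, on a connected tree network. Then w̃ = ŵ. -/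
/-!
The quadratic form `q(v, ℓ, S) = v ℓ - ‖S‖²` vanishes at both solutions `w̃`, `ŵ` of a line and
at their sum, so its polar form vanishes on `(w̃, ŵ)`. Hence `q(v̂ w̃ - ṽ ŵ) = 0`; the
`v`-coordinate of `v̂ w̃ - ṽ ŵ` is zero, so `q` there equals `-‖v̂ S̃ - ṽ Ŝ‖²`, and the two
solutions are proportional on every line: `ŵ = η w̃` with `η = v̂ / ṽ`. The voltage-drop equation
is linear in `(S, ℓ)`, so `v̂_i - v̂_{par i} = η (ṽ_i - ṽ_{par i})`; going down the tree from the
root, where the voltages agree, this forces `η = 1` on every line.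
-/

open ComplexConjugate

section RotatedCone

variable {E : Type*}

theorem smul_eq_smul_of_mul_eq_sq_norm [NormedAddCommGroup E] [InnerProductSpace ℝ E]
    {a b l m : ℝ} {x y : E} (hx : a * l = ‖x‖ ^ 2) (hy : b * m = ‖y‖ ^ 2)
    (hxy : (a + b) * (l + m) = ‖x + y‖ ^ 2) : b • x = a • y := by
  have hinner : 2 * inner ℝ x y = a * m + b * l := by
    linear_combination -norm_add_sq_real x y - hxy + hx + hy
  have hsq : ‖b • x - a • y‖ ^ 2 = 0 := by
    rw [norm_sub_sq_real, norm_smul, norm_smul, real_inner_smul_left, real_inner_smul_right,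
      mul_pow, mul_pow, Real.norm_eq_abs, Real.norm_eq_abs, sq_abs, sq_abs]
    linear_combination (-b ^ 2) * hx - a ^ 2 * hy - a * b * hinner
  exact sub_eq_zero.mp (norm_eq_zero.mp (pow_eq_zero_iff two_ne_zero |>.mp hsq))

theorem mul_eq_mul_of_smul_eq_smul [SeminormedAddCommGroup E] [NormedSpace ℝ E]
    {a b l m : ℝ} {x y : E} (ha : a ≠ 0) (hb : b ≠ 0) (hx : a * l = ‖x‖ ^ 2)
    (hy : b * m = ‖y‖ ^ 2) (hxy : b • x = a • y) : a * m = b * l := by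
  have hnorm : b ^ 2 * ‖x‖ ^ 2 = a ^ 2 * ‖y‖ ^ 2 := by
    rw [← sq_abs b, ← sq_abs a, ← Real.norm_eq_abs, ← Real.norm_eq_abs, ← mul_pow, ← mul_pow,
      ← norm_smul, ← norm_smul, hxy]
  refine mul_left_cancel₀ (mul_ne_zero ha hb) ?_
  linear_combination (-b ^ 2) * hx + a ^ 2 * hy - hnorm

end RotatedCone

theorem mul_eq_sq_norm_of_half_mul_half {𝕜 : Type*} [RCLike 𝕜] {a b : ℝ} {x : 𝕜}
    (h : a / 2 * (b / 2) = ‖x / 2‖ ^ 2) : a * b = ‖x‖ ^ 2 := by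
  rw [norm_div, RCLike.norm_two] at h
  linarith

theorem eq_of_smul_eq_smul_of_voltage_drop {z St Sh : ℂ} {vt vh lt lh vpt vph : ℝ}
    (hS : vh • St = vt • Sh) (hl : vt * lh = vh * lt) (hp : vpt = vph) (hp0 : vpt ≠ 0)
    (ht : vt - vpt = 2 * (conj z * St).re - ‖z‖ ^ 2 * lt)
    (hh : vh - vph = 2 * (conj z * Sh).re - ‖z‖ ^ 2 * lh) : vt = vh := by
  have hre : vh * (conj z * St).re = vt * (conj z * Sh).re := by
    simpa [Complex.real_smul, mul_left_comm] using congrArg (fun w => (conj z * w).re) hS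
  subst hp
  refine mul_left_cancel₀ hp0 ?_
  linear_combination vh * ht - vt * hh + 2 * hre + ‖z‖ ^ 2 * hl

theorem exact_solution_unique_general (n : ℕ) (par : ℕ → ℕ)
    (hpar : ∀ i, 1 ≤ i → par i < i)
    (z : ℕ → ℂ) (v0 : ℝ)
    (St Sh : ℕ → ℂ) (vt vh lt lh : ℕ → ℝ) (s0t s0h : ℂ)
    -- positivity of voltages and nonnegativity of currents
    (hvtpos : ∀ i, i ≤ n → 0 < vt i) (hvhpos : ∀ i, i ≤ n → 0 < vh i)
    -- fixed root voltage
    (hvt0 : vt 0 = v0) (hvh0 : vh 0 = v0)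
    -- branch flow equations for the first solution
    (hs0t : 0 = s0t + ∑ h ∈ (Finset.Icc 1 n).filter (fun h => par h = 0),
        (St h - z h * (lt h : ℂ)))
    (hvt : ∀ i, 1 ≤ i → i ≤ n →
      vt i - vt (par i) = 2 * ((starRingEnd ℂ) (z i) * St i).re - ‖z i‖ ^ 2 * lt i)
    -- branch flow equations for the second solution
    (hs0h : 0 = s0h + ∑ h ∈ (Finset.Icc 1 n).filter (fun h => par h = 0),
        (Sh h - z h * (lh h : ℂ)))
    (hvh : ∀ i, 1 ≤ i → i ≤ n →
      vh i - vh (par i) = 2 * ((starRingEnd ℂ) (z i) * Sh i).re - ‖z i‖ ^ 2 * lh i)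
    -- exactness of both solutions
    (hext : ∀ i, 1 ≤ i → i ≤ n → vt i * lt i = ‖St i‖ ^ 2)
    (hexh : ∀ i, 1 ≤ i → i ≤ n → vh i * lh i = ‖Sh i‖ ^ 2)
    -- exactness of the midpoint
    (hmid : ∀ i, 1 ≤ i → i ≤ n →
      ((vt i + vh i) / 2) * ((lt i + lh i) / 2) = ‖(St i + Sh i) / 2‖ ^ 2) :
    (∀ i, 1 ≤ i → i ≤ n → St i = Sh i ∧ vt i = vh i ∧ lt i = lh i) ∧ s0t = s0h := by
  have hprop : ∀ i, 1 ≤ i → i ≤ n → vh i • St i = vt i • Sh i ∧ vt i * lh i = vh i * lt i :=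
    fun i hi hin =>
      have hS := smul_eq_smul_of_mul_eq_sq_norm (hext i hi hin) (hexh i hi hin)
        (mul_eq_sq_norm_of_half_mul_half (hmid i hi hin))
      ⟨hS, mul_eq_mul_of_smul_eq_smul (hvtpos i hin).ne' (hvhpos i hin).ne' (hext i hi hin)
        (hexh i hi hin) hS⟩
  have hv : ∀ i, i ≤ n → vt i = vh i := by
    intro i
    induction i using Nat.strong_induction_on with
    | _ i ih =>
      intro hin
      rcases i.eq_zero_or_pos with rfl | hi
      · rw [hvt0, hvh0]
      · exact eq_of_smul_eq_smul_of_voltage_drop (hprop i hi hin).1 (hprop i hi hin).2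
          (ih _ (hpar i hi) (by grind)) (hvtpos _ (by grind)).ne' (hvt i hi hin) (hvh i hi hin)
  have hline : ∀ i, 1 ≤ i → i ≤ n → St i = Sh i ∧ vt i = vh i ∧ lt i = lh i := by
    intro i hi hin
    obtain ⟨hS, hl⟩ := hprop i hi hin
    rw [hv i hin] at hS hl
    have hvhne := (hvhpos i hin).ne'
    exact ⟨smul_right_injective ℂ hvhne hS, hv i hin, (mul_left_cancel₀ hvhne hl).symm⟩
  refine ⟨hline, ?_⟩
  have hroot : ∑ h ∈ (Finset.Icc 1 n).filter (fun h => par h = 0), (St h - z h * (lt h : ℂ))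
      = ∑ h ∈ (Finset.Icc 1 n).filter (fun h => par h = 0), (Sh h - z h * (lh h : ℂ)) := by
    refine Finset.sum_congr rfl fun h hh => ?_
    obtain ⟨hh1, hhn⟩ := Finset.mem_Icc.mp (Finset.mem_filter.mp hh).1
    obtain ⟨hS, -, hl⟩ := hline h hh1 hhn
    rw [hS, hl]
  linear_combination hs0h - hs0t - hroot

/-- Theorem 3 (uniqueness of the exact SOCP solution): on a connected tree network with fixed
root voltage `v₀` and the same injections, two branch-flow solutions that are exact
(`v_i ℓ_{ij} = |S_{ij}|²` on every line) and whose midpoint is also exact must coincide. -/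
theorem exact_solution_unique (n : ℕ) (par : ℕ → ℕ)
    (hpar0 : par 0 = 0) (hpar : ∀ i, 1 ≤ i → par i < i)
    (z : ℕ → ℂ) (v0 : ℝ) (hv0 : 0 < v0)
    (st sh St Sh : ℕ → ℂ) (vt vh lt lh : ℕ → ℝ) (s0t s0h : ℂ)
    -- same injections
    (hs : ∀ i, 1 ≤ i → i ≤ n → st i = sh i)
    -- positivity of voltages and nonnegativity of currents
    (hvtpos : ∀ i, i ≤ n → 0 < vt i) (hvhpos : ∀ i, i ≤ n → 0 < vh i)
    (hltpos : ∀ i, 1 ≤ i → i ≤ n → 0 ≤ lt i) (hlhpos : ∀ i, 1 ≤ i → i ≤ n → 0 ≤ lh i)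
    -- fixed root voltage
    (hvt0 : vt 0 = v0) (hvh0 : vh 0 = v0)
    -- branch flow equations for the first solution
    (hSt : ∀ i, 1 ≤ i → i ≤ n →
      St i = st i + ∑ h ∈ (Finset.Icc 1 n).filter (fun h => par h = i),
        (St h - z h * (lt h : ℂ)))
    (hs0t : 0 = s0t + ∑ h ∈ (Finset.Icc 1 n).filter (fun h => par h = 0),
        (St h - z h * (lt h : ℂ)))
    (hvt : ∀ i, 1 ≤ i → i ≤ n →
      vt i - vt (par i) = 2 * ((starRingEnd ℂ) (z i) * St i).re - ‖z i‖ ^ 2 * lt i)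
    -- branch flow equations for the second solution
    (hSh : ∀ i, 1 ≤ i → i ≤ n →
      Sh i = sh i + ∑ h ∈ (Finset.Icc 1 n).filter (fun h => par h = i),
        (Sh h - z h * (lh h : ℂ)))
    (hs0h : 0 = s0h + ∑ h ∈ (Finset.Icc 1 n).filter (fun h => par h = 0),
        (Sh h - z h * (lh h : ℂ)))
    (hvh : ∀ i, 1 ≤ i → i ≤ n →
      vh i - vh (par i) = 2 * ((starRingEnd ℂ) (z i) * Sh i).re - ‖z i‖ ^ 2 * lh i)
    -- exactness of both solutions
    (hext : ∀ i, 1 ≤ i → i ≤ n → vt i * lt i = ‖St i‖ ^ 2)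
    (hexh : ∀ i, 1 ≤ i → i ≤ n → vh i * lh i = ‖Sh i‖ ^ 2)
    -- exactness of the midpoint
    (hmid : ∀ i, 1 ≤ i → i ≤ n →
      ((vt i + vh i) / 2) * ((lt i + lh i) / 2) = ‖(St i + Sh i) / 2‖ ^ 2) :
    (∀ i, 1 ≤ i → i ≤ n → St i = Sh i ∧ vt i = vh i ∧ lt i = lh i) ∧ s0t = s0h :=
  exact_solution_unique_general n par hpar z v0 St Sh vt vh lt lh s0t s0h hvtpos hvhpos hvt0 hvh0
    hs0t hvt hs0h hvh hext hexh hmid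
end

section
/- (Key positivity step in the exactness proof.) Let u₂ = (r₂₁, x₂₁)ᵀ > 0 and A̲₁ = I − (2/v̲₁)(r₁₀, x₁₀)ᵀ (P̂⁺₁₀, Q̂⁺₁₀) with A̲₁ u₂ > 0 componentwise. Let B₁ = I − (2/v₁)(r₁₀, x₁₀)ᵀ ((P₁₀+P₁₀′)/2, (Q₁₀+Q₁₀′)/2). Assume v₁ ≥ v̲₁ > 0, P₁₀ ≤ P̂⁺₁₀, P₁₀′ ≤ P̂⁺₁₀, Q₁₀ ≤ Q̂⁺₁₀, Q₁₀′ ≤ Q̂⁺₁₀, with P̂⁺₁₀ ≥ 0, Q̂⁺₁₀ ≥ 0, and r₁₀, x₁₀ > 0. Then B₁ u₂ > 0 componentwise. -/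
/-!
Both `A̲₁` and `B₁` have the form `I − c • w vᵀ` with the same `w = (r₁₀, x₁₀)ᵀ ≥ 0`, and
`(I − c • w vᵀ) u = u − c (v ⬝ u) • w` decreases as the scalar `c (v ⬝ u)` grows. Since
`0 < 2/v₁ ≤ 2/v̲₁` and the averaged powers are dominated by `P̂⁺₁₀, Q̂⁺₁₀ ≥ 0`, the scalar of `B₁`
is at most that of `A̲₁`, hence `B₁ u₂ ≥ A̲₁ u₂ > 0`.
-/

namespace Matrix

variable {n R : Type*} [Fintype n] [DecidableEq n]

theorem one_sub_smul_vecMulVec_mulVec [CommRing R] (c : R) (w v u : n → R) :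
    (1 - c • vecMulVec w v) *ᵥ u = u - (c * (v ⬝ᵥ u)) • w := by
  rw [sub_mulVec, one_mulVec, smul_mulVec, vecMulVec_mulVec, op_smul_eq_smul, smul_smul]

variable [CommRing R] [PartialOrder R] [IsOrderedRing R]

theorem one_sub_smul_vecMulVec_mulVec_le {c c' : R} {w v v' u : n → R} (hw : 0 ≤ w)
    (hc : 0 ≤ c) (hcc' : c ≤ c') (hvv' : v ≤ v') (hv' : 0 ≤ v') (hu : 0 ≤ u) :
    (1 - c' • vecMulVec w v') *ᵥ u ≤ (1 - c • vecMulVec w v) *ᵥ u := by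
  have hcoeff : c * (v ⬝ᵥ u) ≤ c' * (v' ⬝ᵥ u) :=
    calc c * (v ⬝ᵥ u) ≤ c * (v' ⬝ᵥ u) :=
          mul_le_mul_of_nonneg_left (dotProduct_le_dotProduct_of_nonneg_right hvv' hu) hc
      _ ≤ c' * (v' ⬝ᵥ u) := mul_le_mul_of_nonneg_right hcc' (dotProduct_nonneg_of_nonneg hv' hu)
  rw [one_sub_smul_vecMulVec_mulVec, one_sub_smul_vecMulVec_mulVec]
  exact sub_le_sub_left (smul_le_smul_of_nonneg_right hcoeff hw) u

end Matrix

/-- Key positivity step in the exactness proof: with `u₂ = (r₂₁, x₂₁)ᵀ > 0`,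
`A̲₁ = I − (2/v̲₁)(r₁₀,x₁₀)ᵀ(P̂⁺₁₀, Q̂⁺₁₀)` satisfying `A̲₁u₂ > 0`, and
`B₁ = I − (2/v₁)(r₁₀,x₁₀)ᵀ((P₁₀+P₁₀′)/2, (Q₁₀+Q₁₀′)/2)`, where `v₁ ≥ v̲₁ > 0`,
`P₁₀, P₁₀′ ≤ P̂⁺₁₀`, `Q₁₀, Q₁₀′ ≤ Q̂⁺₁₀` with `P̂⁺₁₀, Q̂⁺₁₀ ≥ 0` and `r₁₀, x₁₀ > 0`,
one has `B₁u₂ > 0` componentwise. -/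
theorem B_positive (r10 x10 r21 x21 v1 vl1 Phat Qhat P P' Q Q' : ℝ)
    (hr10 : 0 < r10) (hx10 : 0 < x10) (hr21 : 0 < r21) (hx21 : 0 < x21)
    (hvl : 0 < vl1) (hv1 : vl1 ≤ v1)
    (hPhat : 0 ≤ Phat) (hQhat : 0 ≤ Qhat)
    (hP : P ≤ Phat) (hP' : P' ≤ Phat) (hQ : Q ≤ Qhat) (hQ' : Q' ≤ Qhat)
    (hA : ∀ a, 0 <
      ((1 : Matrix (Fin 2) (Fin 2) ℝ)
          - (2 / vl1) • Matrix.of (fun i j => ![r10, x10] i * ![Phat, Qhat] j)).mulVec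
        ![r21, x21] a) :
    ∀ a, 0 <
      ((1 : Matrix (Fin 2) (Fin 2) ℝ)
          - (2 / v1) • Matrix.of
              (fun i j => ![r10, x10] i * ![(P + P') / 2, (Q + Q') / 2] j)).mulVec
        ![r21, x21] a := by
  have hw : 0 ≤ ![r10, x10] := fun i => by fin_cases i <;> simp [hr10.le, hx10.le]
  have hu : 0 ≤ ![r21, x21] := fun i => by fin_cases i <;> simp [hr21.le, hx21.le]
  have hv' : 0 ≤ ![Phat, Qhat] := fun i => by fin_cases i <;> simp [hPhat, hQhat]
  have hvv' : ![(P + P') / 2, (Q + Q') / 2] ≤ ![Phat, Qhat] := fun i => by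
    fin_cases i <;> simp <;> linarith
  have hcc' : 2 / v1 ≤ 2 / vl1 := div_le_div_of_nonneg_left zero_le_two hvl hv1
  have hB : _ ≤ _ := Matrix.one_sub_smul_vecMulVec_mulVec_le hw
    (div_nonneg zero_le_two (hvl.trans_le hv1).le) hcc' hvv' hv' hu
  exact fun a => (hA a).trans_le (hB a)
end
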